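/- arXiv:1803.06953 — 8 statements merged into one kernel-verified Lean document; each statement's English description precedes it below -/
import Mathlib

section
/- Let K ≥ 1 and let g : ℝ → ℝ be odd, nondecreasing, and such that g(b) − g(a) ≥ (b − a)/K whenever 1 ≤ a ≤ b. Then for all r, ζ ∈ ℝ with |r| ∨ |ζ| ≥ 2 one has K|g(r) − g(ζ)| ≥ (1/3)|r − ζ|. -/
theorem coercivity_away_from_origin (K : ℝ) (hK : 1 ≤ K) (g : ℝ → ℝ)
    (hodd : ∀ r : ℝ, g (-r) = -g r) (hmono : Monotone g)
    (hgrow : ∀ a b : ℝ, 1 ≤ a → a ≤ b → (b - a) / K ≤ g b - g a) :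
    ∀ r ζ : ℝ, 2 ≤ max |r| |ζ| → (1 / 3) * |r - ζ| ≤ K * |g r - g ζ| := by
  have hK0 : (0:ℝ) < K := by linarith
  have hg0 : g 0 = 0 := by have := hodd 0; simp at this; linarith
  have hg1 : 0 ≤ g 1 := by
    have := hmono (by norm_num : (0:ℝ) ≤ 1); linarith
  have key : ∀ r ζ : ℝ, 2 ≤ r → ζ ≤ r → (1/3) * (r - ζ) ≤ K * (g r - g ζ) := by
    intro r ζ hr hζ
    rcases le_or_gt 1 ζ with h1 | h1
    · have h := hgrow ζ r h1 hζ
      rw [div_le_iff₀ hK0] at h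
      nlinarith
    rcases le_or_gt ζ (-1) with h2 | h2
    · have ha := hgrow 1 r (le_refl 1) (by linarith)
      have hb := hgrow 1 (-ζ) (le_refl 1) (by linarith)
      rw [div_le_iff₀ hK0] at ha hb
      have hoζ := hodd ζ
      nlinarith
    · have ha := hgrow 1 r (le_refl 1) (by linarith)
      rw [div_le_iff₀ hK0] at ha
      have hb : g ζ ≤ g 1 := hmono h1.le
      nlinarith
  have main2 : ∀ r ζ : ℝ, ζ ≤ r → 2 ≤ max |r| |ζ| →
      (1/3) * |r - ζ| ≤ K * |g r - g ζ| := by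
    intro r ζ hle hmax
    have hmono' : g ζ ≤ g r := hmono hle
    rw [abs_of_nonneg (by linarith : (0:ℝ) ≤ r - ζ),
        abs_of_nonneg (by linarith : (0:ℝ) ≤ g r - g ζ)]
    have hcase : 2 ≤ r ∨ ζ ≤ -2 := by
      rcases le_max_iff.mp hmax with h | h
      · rcases le_abs.mp h with h' | h'
        · exact Or.inl h'
        · exact Or.inr (by linarith)
      · rcases le_abs.mp h with h' | h'
        · exact Or.inl (by linarith)
        · exact Or.inr (by linarith)
    rcases hcase with h | h
    · exact key r ζ h hle
    · have hk := key (-ζ) (-r) (by linarith) (by linarith)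
      rw [hodd ζ, hodd r] at hk
      linarith
  intro r ζ hmax
  rcases le_total ζ r with h | h
  · exact main2 r ζ h hmax
  · rw [abs_sub_comm r ζ, abs_sub_comm (g r) (g ζ)]
    exact main2 ζ r h (by rwa [max_comm])
end

section
/- Let d ≥ 1, m > 1, K ≥ 1, and let Ψ : ℝ → ℝ satisfy K|Ψ(r) − Ψ(ζ)| ≥ |r − ζ| whenever |r| ∨ |ζ| ≥ 1 and K|Ψ(r) − Ψ(ζ)| ≥ |r − ζ|^{(m+1)/2} whenever |r| ∨ |ζ| < 1. Let ε ∈ (0,1), let ϱ : 𝕋^d → [0,∞) be integrable with ∫_{𝕋^d} ϱ = 1 and ϱ(z) = 0 whenever dist(z, 0) > ε, and let u : 𝕋^d → ℝ be integrable with Ψ∘u integrable. Suppose there is G ≥ 0 such that ∫_{𝕋^d} |Ψ(u(x)) − Ψ(u(x − z))| dx ≤ G · dist(z, 0) for every z ∈ 𝕋^d. Then ∫_{𝕋^d} ∫_{𝕋^d} |u(x) − u(y)| ϱ(x − y) dx dy ≤ N ε^{2/(m+1)} (1 + G), where N depends only on d, K and m. -/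
open MeasureTheory

/-- The `d`-dimensional torus `ℝ^d/ℤ^d`. -/
abbrev Torus (d : ℕ) := Fin d → AddCircle (1 : ℝ)

instance : IsProbabilityMeasure (volume : Measure (AddCircle (1:ℝ))) :=
  ⟨by rw [AddCircle.measure_univ]; norm_num⟩

instance (d : ℕ) : Measure.IsNegInvariant (volume : Measure (Torus d)) :=
  Measure.pi.isNegInvariant _

private lemma key_pointwise (m K : ℝ) (hm : 1 < m) (hK : 1 ≤ K) (Ψ : ℝ → ℝ)
    (h1 : ∀ r ζ : ℝ, 1 ≤ max |r| |ζ| → |r - ζ| ≤ K * |Ψ r - Ψ ζ|)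
    (h2 : ∀ r ζ : ℝ, max |r| |ζ| < 1 → |r - ζ| ^ ((m + 1) / 2) ≤ K * |Ψ r - Ψ ζ|)
    (ε : ℝ) (hε0 : 0 < ε) (a b : ℝ) :
    |a - b| ≤ (K + K * ε ^ (2 / (m + 1) - 1)) * |Ψ a - Ψ b| + ε ^ (2 / (m + 1)) := by
  set θ : ℝ := 2 / (m + 1) with hθ
  have hm1 : (0:ℝ) < m + 1 := by linarith
  have hθ0 : 0 < θ := by positivity
  have hθ1 : θ < 1 := by rw [hθ, div_lt_one hm1]; linarith
  have hD : 0 ≤ |Ψ a - Ψ b| := abs_nonneg _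
  have hK0 : (0:ℝ) < K := by linarith
  have he1 : 0 ≤ ε ^ (θ - 1) := Real.rpow_nonneg hε0.le _
  have he2 : 0 ≤ ε ^ θ := Real.rpow_nonneg hε0.le _
  rcases le_or_gt 1 (max |a| |b|) with h | h
  · have hmain := h1 a b h
    nlinarith [mul_nonneg (mul_nonneg hK0.le he1) hD]
  · have ha0 : 0 ≤ |a - b| := abs_nonneg _
    have hmain := h2 a b h
    set A : ℝ := |a - b| ^ ((m + 1) / 2) with hA
    have hA0 : 0 ≤ A := Real.rpow_nonneg ha0 _
    have hab : |a - b| = A ^ θ := by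
      rw [hA, ← Real.rpow_mul ha0,
        show (m + 1) / 2 * θ = 1 by rw [hθ]; field_simp, Real.rpow_one]
    have hstep : A ^ θ ≤ ε ^ θ + A * ε ^ (θ - 1) := by
      rcases le_or_gt A ε with hAε | hAε
      · have h' : A ^ θ ≤ ε ^ θ := Real.rpow_le_rpow hA0 hAε hθ0.le
        nlinarith [mul_nonneg hA0 he1]
      · have hA_pos : 0 < A := lt_trans hε0 hAε
        have e1 : A ^ θ = A * A ^ (θ - 1) := by
          rw [show θ = 1 + (θ - 1) by ring, Real.rpow_add hA_pos, Real.rpow_one]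
          ring_nf
        have e2 : A ^ (θ - 1) ≤ ε ^ (θ - 1) :=
          Real.rpow_le_rpow_of_nonpos hε0 hAε.le (by linarith)
        calc A ^ θ = A * A ^ (θ - 1) := e1
          _ ≤ A * ε ^ (θ - 1) := mul_le_mul_of_nonneg_left e2 hA0
          _ ≤ ε ^ θ + A * ε ^ (θ - 1) := by linarith
    have h3 : A * ε ^ (θ - 1) ≤ K * |Ψ a - Ψ b| * ε ^ (θ - 1) :=
      mul_le_mul_of_nonneg_right hmain he1
    rw [hab]
    nlinarith [mul_nonneg hK0.le hD]

theorem fractional_regularity (d : ℕ) (hd : 1 ≤ d) (m K : ℝ) (hm : 1 < m) (hK : 1 ≤ K) :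
    ∃ N : ℝ, ∀ Ψ : ℝ → ℝ,
      (∀ r ζ : ℝ, 1 ≤ max |r| |ζ| → |r - ζ| ≤ K * |Ψ r - Ψ ζ|) →
      (∀ r ζ : ℝ, max |r| |ζ| < 1 → |r - ζ| ^ ((m + 1) / 2) ≤ K * |Ψ r - Ψ ζ|) →
      ∀ ε : ℝ, ε ∈ Set.Ioo (0 : ℝ) 1 →
      ∀ ϱ : Torus d → ℝ, Integrable ϱ → (∀ z, 0 ≤ ϱ z) → (∫ z, ϱ z) = 1 →
        (∀ z : Torus d, ε < dist z 0 → ϱ z = 0) →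
      ∀ u : Torus d → ℝ, Integrable u → Integrable (fun x => Ψ (u x)) →
      ∀ G : ℝ, 0 ≤ G →
        (∀ z : Torus d, (∫ x, |Ψ (u x) - Ψ (u (x - z))|) ≤ G * dist z 0) →
        (∫ x, ∫ y, |u x - u y| * ϱ (x - y)) ≤ N * ε ^ (2 / (m + 1)) * (1 + G) := by
  refine ⟨2 * K, fun Ψ h1 h2 ε hε ϱ hϱ_int hϱ_nonneg hϱ_one hϱ_supp u hu hΨu G hG hG_bound => ?_⟩
  obtain ⟨hε0, hε1⟩ := hε
  set θ : ℝ := 2 / (m + 1) with hθ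
  have hm1 : (0:ℝ) < m + 1 := by linarith
  have hθ0 : 0 < θ := by positivity
  have hθ1 : θ < 1 := by rw [hθ, div_lt_one hm1]; linarith
  have hK0 : (0:ℝ) < K := by linarith
  have heθ : 0 < ε ^ θ := Real.rpow_pos_of_pos hε0 _
  have heθ1 : 0 ≤ ε ^ (θ - 1) := Real.rpow_nonneg hε0.le _
  have hΨu_shift : ∀ z : Torus d, Integrable (fun x => Ψ (u (x - z))) :=
    fun z => hΨu.comp_sub_right z
  have hΔΨ : ∀ z : Torus d, Integrable (fun x => |Ψ (u x) - Ψ (u (x - z))|) :=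
    fun z => (hΨu.sub (hΨu_shift z)).abs
  -- bound on the inner integral for z near 0
  have hIle : ∀ z : Torus d, dist z 0 ≤ ε →
      (∫ x, |u x - u (x - z)|) ≤ 2 * K * ε ^ θ * (1 + G) := by
    intro z hz
    have hBint : Integrable (fun x : Torus d =>
        (K + K * ε ^ (θ - 1)) * |Ψ (u x) - Ψ (u (x - z))| + ε ^ θ) :=
      ((hΔΨ z).const_mul _).add (integrable_const _)
    have hmono : (∫ x, |u x - u (x - z)|) ≤
        ∫ x, ((K + K * ε ^ (θ - 1)) * |Ψ (u x) - Ψ (u (x - z))| + ε ^ θ) :=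
      integral_mono_of_nonneg (Filter.Eventually.of_forall fun x => abs_nonneg _) hBint
        (Filter.Eventually.of_forall fun x => key_pointwise m K hm hK Ψ h1 h2 ε hε0 _ _)
    have hsplit : (∫ x, ((K + K * ε ^ (θ - 1)) * |Ψ (u x) - Ψ (u (x - z))| + ε ^ θ))
        = (K + K * ε ^ (θ - 1)) * (∫ x, |Ψ (u x) - Ψ (u (x - z))|) + ε ^ θ := by
      rw [integral_add ((hΔΨ z).const_mul _) (integrable_const _), integral_const_mul,
        integral_const]
      simp
    have hΨb : (∫ x, |Ψ (u x) - Ψ (u (x - z))|) ≤ G * ε :=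
      le_trans (hG_bound z) (mul_le_mul_of_nonneg_left hz hG)
    have hKε : (0:ℝ) ≤ K + K * ε ^ (θ - 1) := by positivity
    have hmul : (K + K * ε ^ (θ - 1)) * (∫ x, |Ψ (u x) - Ψ (u (x - z))|)
        ≤ (K + K * ε ^ (θ - 1)) * (G * ε) := mul_le_mul_of_nonneg_left hΨb hKε
    have hmulε : ε ^ (θ - 1) * ε = ε ^ θ := by
      nth_rewrite 2 [show (ε : ℝ) = ε ^ (1:ℝ) from (Real.rpow_one ε).symm]
      rw [← Real.rpow_add hε0]
      norm_num
    have hεle : ε ≤ ε ^ θ := by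
      calc ε = ε ^ (1:ℝ) := (Real.rpow_one ε).symm
        _ ≤ ε ^ θ := Real.rpow_le_rpow_of_exponent_ge hε0 hε1.le hθ1.le
    have harith : (K + K * ε ^ (θ - 1)) * (G * ε) + ε ^ θ ≤ 2 * K * ε ^ θ * (1 + G) := by
      have e1 : K * G * ε ≤ K * G * ε ^ θ :=
        mul_le_mul_of_nonneg_left hεle (mul_nonneg hK0.le hG)
      have expand : (K + K * ε ^ (θ - 1)) * (G * ε) + ε ^ θ
          = K * G * ε + K * G * ε ^ θ + ε ^ θ := by rw [← hmulε]; ring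
      have e3 : ε ^ θ ≤ 2 * K * ε ^ θ := by nlinarith [heθ.le]
      rw [expand]
      nlinarith [e1, e3, mul_nonneg (mul_nonneg hK0.le hG) heθ.le]
    calc (∫ x, |u x - u (x - z)|)
        ≤ ∫ x, ((K + K * ε ^ (θ - 1)) * |Ψ (u x) - Ψ (u (x - z))| + ε ^ θ) := hmono
      _ = (K + K * ε ^ (θ - 1)) * (∫ x, |Ψ (u x) - Ψ (u (x - z))|) + ε ^ θ := hsplit
      _ ≤ (K + K * ε ^ (θ - 1)) * (G * ε) + ε ^ θ := by linarith
      _ ≤ 2 * K * ε ^ θ * (1 + G) := harith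
  -- change of variables in the inner integral
  have inner_eq : ∀ x : Torus d,
      (∫ y, |u x - u y| * ϱ (x - y)) = ∫ z, |u x - u (x - z)| * ϱ z := by
    intro x
    have h := integral_sub_left_eq_self (fun y => |u x - u y| * ϱ (x - y)) volume x
    simpa [sub_sub_cancel] using h.symm
  -- measure-preserving maps
  have hfst : MeasurePreserving (Prod.fst : Torus d × Torus d → Torus d)
      (volume.prod volume) volume :=
    ⟨measurable_fst, by rw [Measure.map_fst_prod]; simp⟩
  have hsnd : MeasurePreserving (Prod.snd : Torus d × Torus d → Torus d)
      (volume.prod volume) volume :=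
    ⟨measurable_snd, by rw [Measure.map_snd_prod]; simp⟩
  have hsp : MeasurePreserving (fun p : Torus d × Torus d => (p.1 - p.2, p.2))
      (volume.prod volume) (volume.prod volume) := measurePreserving_sub_prod volume volume
  have hsub : MeasurePreserving (fun p : Torus d × Torus d => p.1 - p.2)
      (volume.prod volume) volume := hfst.comp hsp
  have hu_aesm := hu.aestronglyMeasurable
  have hϱ_aesm := hϱ_int.aestronglyMeasurable
  have hF_aesm : AEStronglyMeasurable
      (fun p : Torus d × Torus d => |u p.1 - u (p.1 - p.2)| * ϱ p.2) (volume.prod volume) := by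
    refine AEStronglyMeasurable.mul ?_
      (hϱ_aesm.comp_quasiMeasurePreserving hsnd.quasiMeasurePreserving)
    have := ((hu_aesm.comp_quasiMeasurePreserving hfst.quasiMeasurePreserving).sub
      (hu_aesm.comp_quasiMeasurePreserving hsub.quasiMeasurePreserving)).norm
    simpa [Real.norm_eq_abs] using this
  have hg1 : Integrable (fun p : Torus d × Torus d => |u p.1| * ϱ p.2) (volume.prod volume) :=
    hu.abs.mul_prod hϱ_int
  have hg2 : Integrable (fun p : Torus d × Torus d => |u (p.1 - p.2)| * ϱ p.2)
      (volume.prod volume) := (hsp.integrable_comp hg1.aestronglyMeasurable).2 hg1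
  have hF_int : Integrable (Function.uncurry fun x z : Torus d => |u x - u (x - z)| * ϱ z)
      (volume.prod volume) := by
    refine Integrable.mono' (hg1.add hg2) hF_aesm (Filter.Eventually.of_forall fun p => ?_)
    have h1' : |u p.1 - u (p.1 - p.2)| ≤ |u p.1| + |u (p.1 - p.2)| := abs_sub _ _
    have h2' : 0 ≤ ϱ p.2 := hϱ_nonneg _
    show |(|u p.1 - u (p.1 - p.2)| * ϱ p.2)| ≤ |u p.1| * ϱ p.2 + |u (p.1 - p.2)| * ϱ p.2
    rw [abs_mul, abs_abs, abs_of_nonneg h2']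
    calc |u p.1 - u (p.1 - p.2)| * ϱ p.2
        ≤ (|u p.1| + |u (p.1 - p.2)|) * ϱ p.2 := mul_le_mul_of_nonneg_right h1' h2'
      _ = |u p.1| * ϱ p.2 + |u (p.1 - p.2)| * ϱ p.2 := add_mul _ _ _
  have hswap : (∫ x, ∫ z, |u x - u (x - z)| * ϱ z) = ∫ z, ∫ x, |u x - u (x - z)| * ϱ z :=
    integral_integral_swap hF_int
  have hfinal : (∫ z, (∫ x, |u x - u (x - z)|) * ϱ z)
      ≤ ∫ z, (2 * K * ε ^ θ * (1 + G)) * ϱ z := by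
    refine integral_mono_of_nonneg
      (Filter.Eventually.of_forall fun z =>
        mul_nonneg (integral_nonneg fun x => abs_nonneg _) (hϱ_nonneg z))
      (hϱ_int.const_mul _)
      (Filter.Eventually.of_forall fun z => ?_)
    rcases le_or_gt (dist z 0) ε with hz | hz
    · exact mul_le_mul_of_nonneg_right (hIle z hz) (hϱ_nonneg z)
    · simp [hϱ_supp z hz]
  calc (∫ x, ∫ y, |u x - u y| * ϱ (x - y))
      = ∫ x, ∫ z, |u x - u (x - z)| * ϱ z :=
        integral_congr_ae (Filter.Eventually.of_forall inner_eq)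
    _ = ∫ z, ∫ x, |u x - u (x - z)| * ϱ z := hswap
    _ = ∫ z, (∫ x, |u x - u (x - z)|) * ϱ z :=
        integral_congr_ae (Filter.Eventually.of_forall fun z => integral_mul_const (ϱ z) _)
    _ ≤ ∫ z, (2 * K * ε ^ θ * (1 + G)) * ϱ z := hfinal
    _ = (2 * K * ε ^ θ * (1 + G)) * ∫ z, ϱ z := integral_const_mul _ _
    _ = 2 * K * ε ^ θ * (1 + G) := by rw [hϱ_one, mul_one]
end

section
/- Let m > 1, K ≥ 1, and let Ψ : ℝ → ℝ satisfy K|Ψ(r) − Ψ(ζ)| ≥ |r − ζ| whenever |r| ∨ |ζ| ≥ 1 and K|Ψ(r) − Ψ(ζ)| ≥ |r − ζ|^{(m+1)/2} whenever |r| ∨ |ζ| < 1. Let (S, μ) be a measure space with μ(S) ≤ C < ∞, and let u₁, u₂ : S → ℝ be measurable functions such that u₁ − u₂ and Ψ∘u₁ − Ψ∘u₂ are integrable. Then ∫_S |u₁ − u₂| dμ ≤ K ∫_S |Ψ(u₁) − Ψ(u₂)| dμ + C^{(m−1)/(m+1)} (K ∫_S |Ψ(u₁) − Ψ(u₂)|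 dμ)^{2/(m+1)}. -/
/-!
Put `g := K |Ψ(u₁) - Ψ(u₂)|` and `θ := 2 / (m + 1)`. Where `|u₁| ∨ |u₂| ≥ 1` the first growth
condition gives `|u₁ - u₂| ≤ g`, elsewhere the second gives `|u₁ - u₂| ≤ g ^ θ`; hence
`|u₁ - u₂| ≤ g + g ^ θ` everywhere. Jensen's inequality for the concave map `t ↦ t ^ θ` (the
Hölder step with exponent `(m + 1) / 2`) bounds `∫ g ^ θ` by `μ(S) ^ (1 - θ) (∫ g) ^ θ`.
-/

open MeasureTheory

namespace MeasureTheory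

variable {α : Type*} [MeasurableSpace α] {μ : Measure α} [IsFiniteMeasure μ]

theorem Integrable.abs_rpow {g : α → ℝ} (hg : Integrable g μ) {θ : ℝ} (hθ0 : 0 ≤ θ) (hθ1 : θ ≤ 1) :
    Integrable (fun x => |g x| ^ θ) μ := by
  have hθ : 1 ≤ 1 / ENNReal.ofReal θ := by
    rw [one_div, ENNReal.one_le_inv]; exact ENNReal.ofReal_le_one.2 hθ1
  have := ((memLp_one_iff_integrable.2 hg).norm_rpow_div (ENNReal.ofReal θ)).mono_exponent hθ
  simpa [ENNReal.toReal_ofReal hθ0, memLp_one_iff_integrable] using this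

theorem integral_rpow_le_measureReal_univ_rpow_mul {g : α → ℝ} (hg0 : 0 ≤ g) (hg : Integrable g μ)
    {θ : ℝ} (hθ0 : 0 ≤ θ) (hθ1 : θ ≤ 1) :
    ∫ x, g x ^ θ ∂μ ≤ μ.real Set.univ ^ (1 - θ) * (∫ x, g x ∂μ) ^ θ := by
  rcases eq_zero_or_neZero μ with rfl | hμ
  · simp only [integral_zero_measure]; positivity
  have hgθ : Integrable (fun x => g x ^ θ) μ := by
    simpa only [abs_of_nonneg (hg0 _)] using hg.abs_rpow hθ0 hθ1
  have hjensen := (Real.concaveOn_rpow hθ0 hθ1).le_map_average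
    (Real.continuous_rpow_const hθ0).continuousOn isClosed_Ici (.of_forall hg0) hg hgθ
  have hν : 0 < μ.real Set.univ := measureReal_univ_pos
  rw [average_eq, average_eq, smul_eq_mul, smul_eq_mul,
    Real.mul_rpow (inv_nonneg.2 hν.le) (integral_nonneg hg0), Real.inv_rpow hν.le,
    inv_mul_le_iff₀ hν] at hjensen
  rwa [Real.rpow_sub hν, Real.rpow_one, div_eq_mul_inv, mul_assoc]

theorem integral_le_of_le_add_rpow {f g : α → ℝ} (hf0 : 0 ≤ f) (hg0 : 0 ≤ g)
    (hg : Integrable g μ) {θ C : ℝ} (hθ0 : 0 ≤ θ) (hθ1 : θ ≤ 1) (hμC : μ.real Set.univ ≤ C)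
    (hfg : ∀ x, f x ≤ g x + g x ^ θ) :
    ∫ x, f x ∂μ ≤ ∫ x, g x ∂μ + C ^ (1 - θ) * (∫ x, g x ∂μ) ^ θ := by
  have hgθ : Integrable (fun x => g x ^ θ) μ := by
    simpa only [abs_of_nonneg (hg0 _)] using hg.abs_rpow hθ0 hθ1
  calc ∫ x, f x ∂μ
      ≤ ∫ x, (g x + g x ^ θ) ∂μ :=
        integral_mono_of_nonneg (.of_forall hf0) (hg.add hgθ) (.of_forall hfg)
    _ = ∫ x, g x ∂μ + ∫ x, g x ^ θ ∂μ := integral_add hg hgθ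
    _ ≤ ∫ x, g x ∂μ + μ.real Set.univ ^ (1 - θ) * (∫ x, g x ∂μ) ^ θ := by
        gcongr
        exact integral_rpow_le_measureReal_univ_rpow_mul hg0 hg hθ0 hθ1
    _ ≤ ∫ x, g x ∂μ + C ^ (1 - θ) * (∫ x, g x ∂μ) ^ θ := by
        have : 0 ≤ ∫ x, g x ∂μ := integral_nonneg hg0
        gcongr

end MeasureTheory

theorem le_add_rpow_inv_of_le_or_rpow_le {x y p : ℝ} (hx : 0 ≤ x) (hy : 0 ≤ y) (hp : 0 < p)
    (h : x ≤ y ∨ x ^ p ≤ y) : x ≤ y + y ^ p⁻¹ := by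
  rcases h with h | h
  · linarith [Real.rpow_nonneg hy p⁻¹]
  · linarith [(Real.le_rpow_inv_iff_of_pos hx hy hp).2 h]

theorem L1_interpolation_split_general (m K : ℝ) (hm : 1 < m) (hK : 1 ≤ K) (Ψ : ℝ → ℝ)
    (h1 : ∀ r ζ : ℝ, 1 ≤ max |r| |ζ| → |r - ζ| ≤ K * |Ψ r - Ψ ζ|)
    (h2 : ∀ r ζ : ℝ, max |r| |ζ| < 1 → |r - ζ| ^ ((m + 1) / 2) ≤ K * |Ψ r - Ψ ζ|)
    (S : Type*) [MeasurableSpace S] (μ : Measure S) (C : ℝ) (hC : 0 ≤ C)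
    (hμ : μ Set.univ ≤ ENNReal.ofReal C)
    (u₁ u₂ : S → ℝ)
    (hintΨ : Integrable (fun s => Ψ (u₁ s) - Ψ (u₂ s)) μ) :
    (∫ s, |u₁ s - u₂ s| ∂μ) ≤
      K * (∫ s, |Ψ (u₁ s) - Ψ (u₂ s)| ∂μ)
        + C ^ ((m - 1) / (m + 1)) * (K * ∫ s, |Ψ (u₁ s) - Ψ (u₂ s)| ∂μ) ^ (2 / (m + 1)) := by
  have : IsFiniteMeasure μ := ⟨hμ.trans_lt ENNReal.ofReal_lt_top⟩
  have hg0 (s : S) : 0 ≤ K * |Ψ (u₁ s) - Ψ (u₂ s)| := by positivity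
  have hpointwise (s : S) :
      |u₁ s - u₂ s| ≤ K * |Ψ (u₁ s) - Ψ (u₂ s)| + (K * |Ψ (u₁ s) - Ψ (u₂ s)|) ^ (2 / (m + 1)) := by
    rw [← inv_div]
    refine le_add_rpow_inv_of_le_or_rpow_le (abs_nonneg _) (hg0 s) (by linarith) ?_
    rcases le_or_gt 1 (max |u₁ s| |u₂ s|) with h | h
    exacts [.inl (h1 _ _ h), .inr (h2 _ _ h)]
  have hsplit := integral_le_of_le_add_rpow (fun s => abs_nonneg _) hg0
    (hintΨ.abs.const_mul K) (by positivity) ((div_le_one (by linarith)).2 (by linarith))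
    (ENNReal.toReal_le_of_le_ofReal hC hμ) hpointwise
  have hexp : (m - 1) / (m + 1) = 1 - 2 / (m + 1) := by field_simp; ring
  rwa [hexp, ← integral_const_mul]

theorem L1_interpolation_split (m K : ℝ) (hm : 1 < m) (hK : 1 ≤ K) (Ψ : ℝ → ℝ)
    (h1 : ∀ r ζ : ℝ, 1 ≤ max |r| |ζ| → |r - ζ| ≤ K * |Ψ r - Ψ ζ|)
    (h2 : ∀ r ζ : ℝ, max |r| |ζ| < 1 → |r - ζ| ^ ((m + 1) / 2) ≤ K * |Ψ r - Ψ ζ|)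
    (S : Type*) [MeasurableSpace S] (μ : Measure S) (C : ℝ) (hC : 0 ≤ C)
    (hμ : μ Set.univ ≤ ENNReal.ofReal C)
    (u₁ u₂ : S → ℝ) (hmeas₁ : Measurable u₁) (hmeas₂ : Measurable u₂)
    (hint : Integrable (fun s => u₁ s - u₂ s) μ)
    (hintΨ : Integrable (fun s => Ψ (u₁ s) - Ψ (u₂ s)) μ) :
    (∫ s, |u₁ s - u₂ s| ∂μ) ≤
      K * (∫ s, |Ψ (u₁ s) - Ψ (u₂ s)| ∂μ)
        + C ^ ((m - 1) / (m + 1)) * (K * ∫ s, |Ψ (u₁ s) - Ψ (u₂ s)| ∂μ) ^ (2 / (m + 1)) :=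
  L1_interpolation_split_general m K hm hK Ψ h1 h2 S μ C hC hμ u₁ u₂ hintΨ
end

section
/- Let δ ∈ (0,1) and define ψ_δ : ℝ → ℝ by ψ_δ(ζ) = (ζ |log δ|)^{−1} for ζ ∈ [δ²/2, δ/2] and ψ_δ(ζ) = 0 otherwise; define η_δ : ℝ → ℝ by η_δ(0) = η_δ′(0) = 0 and η_δ″(r) = (ρ_{δ²/4} ∗ ψ_δ)(|r|), where ∗ denotes convolution on ℝ. Then: (a) η_δ″(r) = 0 whenever |r| > δ; (b) ∫_ℝ η_δ″(r − ζ) dζ = 2 for every r; (c) 0 ≤ η_δ″(r) ≤ 2 δ^{−2} |log δ|^{−1} for all r; (d) |η_δ″(r) · r| ≤ 2 |log δ|^{−1} for all r; and (e) | η_δ(r) − |r| | ≤ δ for all r ∈ ℝ. -/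
open MeasureTheory intervalIntegral

/-- The mollifier `ρ_θ(r) = θ⁻¹ ρ(θ⁻¹ r)`. -/
noncomputable def mollify (ρ : ℝ → ℝ) (θ : ℝ) : ℝ → ℝ := fun r => θ⁻¹ * ρ (θ⁻¹ * r)

/-- `ψ_δ(ζ) = (ζ |log δ|)⁻¹` for `ζ ∈ [δ²/2, δ/2]`, and `0` otherwise. -/
noncomputable def psiLog (δ : ℝ) : ℝ → ℝ :=
  fun ζ => if ζ ∈ Set.Icc (δ ^ 2 / 2) (δ / 2) then (ζ * |Real.log δ|)⁻¹ else 0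

/-- The second derivative `η_δ″(r) = (ρ_{δ²/4} ∗ ψ_δ)(|r|)`. -/
noncomputable def etaLogSecond (ρ : ℝ → ℝ) (δ : ℝ) : ℝ → ℝ :=
  fun r => ∫ s : ℝ, mollify ρ (δ ^ 2 / 4) (|r| - s) * psiLog δ s

/-- The logarithmically regularized absolute value
`η_δ(r) = ∫_0^r ∫_0^s (ρ_{δ²/4} ∗ ψ_δ)(|τ|) dτ ds`. -/
noncomputable def etaLog (ρ : ℝ → ℝ) (δ : ℝ) : ℝ → ℝ :=
  fun r => ∫ s in (0 : ℝ)..r, ∫ τ in (0 : ℝ)..s, etaLogSecond ρ δ τ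

section aux

variable {ρ : ℝ → ℝ} {δ : ℝ}

/-- the one-sided convolution `P u = ∫ ψ s * g (u - s)`. -/
noncomputable def convP (ρ : ℝ → ℝ) (δ : ℝ) : ℝ → ℝ :=
  fun u => ∫ s : ℝ, psiLog δ s * mollify ρ (δ ^ 2 / 4) (u - s)

lemma etaLogSecond_eq (r : ℝ) : etaLogSecond ρ δ r = convP ρ δ |r| := by
  unfold etaLogSecond convP
  simp_rw [mul_comm]

lemma g_cont (hρ_smooth : ContDiff ℝ (⊤ : ℕ∞) ρ) : Continuous (mollify ρ (δ ^ 2 / 4)) := by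
  unfold mollify
  exact continuous_const.mul (hρ_smooth.continuous.comp (continuous_const.mul continuous_id))

lemma g_nonneg (hρ_nonneg : ∀ r, 0 ≤ ρ r) (hδ0 : 0 < δ) (t : ℝ) :
    0 ≤ mollify ρ (δ ^ 2 / 4) t := by
  have : (0:ℝ) < δ ^ 2 / 4 := by positivity
  exact mul_nonneg (by positivity) (hρ_nonneg _)

lemma g_zero (hρ_supp : ∀ r, r ∉ Set.Ioo (0 : ℝ) 1 → ρ r = 0) (hδ0 : 0 < δ)
    (t : ℝ) (ht : t ∉ Set.Ioo (0:ℝ) (δ ^ 2 / 4)) : mollify ρ (δ ^ 2 / 4) t = 0 := by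
  have hθ : (0:ℝ) < δ ^ 2 / 4 := by positivity
  unfold mollify
  rw [hρ_supp _ ?_, mul_zero]
  intro hmem
  apply ht
  obtain ⟨h1, h2⟩ := hmem
  constructor
  · nlinarith [mul_pos hθ h1, mul_inv_cancel₀ hθ.ne']
  · nlinarith [mul_lt_mul_of_pos_left h2 hθ, mul_inv_cancel₀ hθ.ne']

lemma g_le (hρ_bdd : ∀ r, ρ r ≤ 2) (hδ0 : 0 < δ) (t : ℝ) :
    mollify ρ (δ ^ 2 / 4) t ≤ (δ ^ 2 / 4)⁻¹ * 2 := by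
  have hθ : (0:ℝ) < δ ^ 2 / 4 := by positivity
  exact mul_le_mul_of_nonneg_left (hρ_bdd _) (by positivity)

lemma g_hcs (hρ_supp : ∀ r, r ∉ Set.Ioo (0 : ℝ) 1 → ρ r = 0) (hδ0 : 0 < δ) :
    HasCompactSupport (mollify ρ (δ ^ 2 / 4)) := by
  apply HasCompactSupport.intro (isCompact_Icc (a := (0:ℝ)) (b := δ ^ 2 / 4))
  intro x hx
  exact g_zero hρ_supp hδ0 x (fun h => hx ⟨h.1.le, h.2.le⟩)

lemma g_int (hρ_smooth : ContDiff ℝ (⊤ : ℕ∞) ρ)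
    (hρ_supp : ∀ r, r ∉ Set.Ioo (0 : ℝ) 1 → ρ r = 0) (hδ0 : 0 < δ) :
    Integrable (mollify ρ (δ ^ 2 / 4)) :=
  (g_cont hρ_smooth).integrable_of_hasCompactSupport (g_hcs hρ_supp hδ0)

lemma g_integral (hρ_int : (∫ r, ρ r) = 1) (hδ0 : 0 < δ) :
    (∫ t, mollify ρ (δ ^ 2 / 4) t) = 1 := by
  have hθ : (0:ℝ) < δ ^ 2 / 4 := by positivity
  unfold mollify
  rw [MeasureTheory.integral_const_mul, MeasureTheory.Measure.integral_comp_inv_mul_left ρ (δ ^ 2 / 4), hρ_int,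
    abs_of_pos hθ]
  field_simp
  simp only [smul_eq_mul, mul_one]
  ring

lemma g_shift (hρ_int : (∫ r, ρ r) = 1) (hδ0 : 0 < δ) (u : ℝ) :
    (∫ s, mollify ρ (δ ^ 2 / 4) (u - s)) = 1 := by
  rw [integral_sub_left_eq_self (mollify ρ (δ ^ 2 / 4)) volume u]
  exact g_integral hρ_int hδ0

end aux

section aux2

variable {ρ : ℝ → ℝ} {δ : ℝ}

lemma L_pos (hδ : δ ∈ Set.Ioo (0:ℝ) 1) : 0 < |Real.log δ| := by
  rw [abs_pos]
  exact (Real.log_neg hδ.1 hδ.2).ne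

lemma psi_meas : Measurable (psiLog δ) := by
  unfold psiLog
  exact Measurable.ite measurableSet_Icc
    ((measurable_id.mul_const _).inv) measurable_const

lemma psi_nonneg (hδ : δ ∈ Set.Ioo (0:ℝ) 1) (s : ℝ) : 0 ≤ psiLog δ s := by
  unfold psiLog
  split_ifs with h
  · have hs : 0 < s := lt_of_lt_of_le (by nlinarith [hδ.1] : (0:ℝ) < δ ^ 2 / 2) h.1
    have := L_pos hδ
    positivity
  · exact le_rfl

lemma psi_zero (s : ℝ) (hs : s ∉ Set.Icc (δ ^ 2 / 2) (δ / 2)) : psiLog δ s = 0 := if_neg hs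

lemma psi_le (hδ : δ ∈ Set.Ioo (0:ℝ) 1) (s : ℝ) :
    psiLog δ s ≤ (δ ^ 2 / 2 * |Real.log δ|)⁻¹ := by
  have hL := L_pos hδ
  have ha : (0:ℝ) < δ ^ 2 / 2 := by nlinarith [hδ.1]
  unfold psiLog
  split_ifs with h
  · exact inv_anti₀ (by positivity) (mul_le_mul_of_nonneg_right h.1 hL.le)
  · positivity

lemma psi_int (hδ : δ ∈ Set.Ioo (0:ℝ) 1) : Integrable (psiLog δ) := by
  have hind : Integrable ((Set.Icc (δ ^ 2 / 2) (δ / 2)).indicator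
      (fun _ => (δ ^ 2 / 2 * |Real.log δ|)⁻¹)) :=
    (integrable_indicator_iff measurableSet_Icc).mpr
      (integrableOn_const measure_Icc_lt_top.ne)
  refine Integrable.mono' hind psi_meas.aestronglyMeasurable ?_
  filter_upwards with s
  rw [Real.norm_eq_abs, abs_of_nonneg (psi_nonneg hδ s)]
  by_cases h : s ∈ Set.Icc (δ ^ 2 / 2) (δ / 2)
  · rw [Set.indicator_of_mem h]
    exact psi_le hδ s
  · rw [Set.indicator_of_notMem h, psi_zero s h]

lemma psi_integral (hδ : δ ∈ Set.Ioo (0:ℝ) 1) : (∫ s, psiLog δ s) = 1 := by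
  have hL := L_pos hδ
  have ha : (0:ℝ) < δ ^ 2 / 2 := by nlinarith [hδ.1]
  have hab : δ ^ 2 / 2 ≤ δ / 2 := by nlinarith [hδ.1, hδ.2]
  have h1 : psiLog δ = (Set.Icc (δ ^ 2 / 2) (δ / 2)).indicator
      (fun ζ => (ζ * |Real.log δ|)⁻¹) := by
    funext ζ
    simp [psiLog, Set.indicator_apply]
  rw [h1, MeasureTheory.integral_indicator measurableSet_Icc, integral_Icc_eq_integral_Ioc,
    ← intervalIntegral.integral_of_le hab]
  have h2 : ∀ ζ : ℝ, (ζ * |Real.log δ|)⁻¹ = ζ⁻¹ * |Real.log δ|⁻¹ := fun ζ => mul_inv ζ _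
  simp_rw [h2]
  rw [intervalIntegral.integral_mul_const, integral_inv (by
    rw [Set.uIcc_of_le hab]
    intro h
    exact absurd h.1 (by push_neg; exact ha))]
  have hba : δ / 2 / (δ ^ 2 / 2) = δ⁻¹ := by
    rw [eq_comm, inv_eq_one_div, div_eq_div_iff hδ.1.ne' (by positivity : (δ ^ 2 / 2 : ℝ) ≠ 0)]
    ring
  rw [hba, Real.log_inv, abs_of_neg (Real.log_neg hδ.1 hδ.2)]
  have : Real.log δ ≠ 0 := (Real.log_neg hδ.1 hδ.2).ne
  field_simp

end aux2

open scoped Convolution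

section aux3

variable {ρ : ℝ → ℝ} {δ : ℝ}

lemma integrand_int (hρ_smooth : ContDiff ℝ (⊤ : ℕ∞) ρ) (hρ_bdd : ∀ r, ρ r ≤ 2)
    (hρ_nonneg : ∀ r, 0 ≤ ρ r) (hδ : δ ∈ Set.Ioo (0:ℝ) 1) (u : ℝ) :
    Integrable (fun s => psiLog δ s * mollify ρ (δ ^ 2 / 4) (u - s)) := by
  have hmeas : Measurable (fun s => psiLog δ s * mollify ρ (δ ^ 2 / 4) (u - s)) :=
    psi_meas.mul (((g_cont hρ_smooth).comp (continuous_const.sub continuous_id)).measurable)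
  set M : ℝ := (δ ^ 2 / 2 * |Real.log δ|)⁻¹ * ((δ ^ 2 / 4)⁻¹ * 2) with hM
  have hind : Integrable ((Set.Icc (δ ^ 2 / 2) (δ / 2)).indicator (fun _ => M)) :=
    (integrable_indicator_iff measurableSet_Icc).mpr
      (integrableOn_const measure_Icc_lt_top.ne)
  refine Integrable.mono' hind hmeas.aestronglyMeasurable ?_
  filter_upwards with s
  rw [Real.norm_eq_abs,
    abs_of_nonneg (mul_nonneg (psi_nonneg hδ s) (g_nonneg hρ_nonneg hδ.1 _))]
  by_cases h : s ∈ Set.Icc (δ ^ 2 / 2) (δ / 2)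
  · rw [Set.indicator_of_mem h]
    exact mul_le_mul (psi_le hδ s) (g_le hρ_bdd hδ.1 _) (g_nonneg hρ_nonneg hδ.1 _)
      (by positivity)
  · rw [Set.indicator_of_notMem h, psi_zero s h, zero_mul]

lemma convP_nonneg (hρ_nonneg : ∀ r, 0 ≤ ρ r) (hδ : δ ∈ Set.Ioo (0:ℝ) 1) (u : ℝ) :
    0 ≤ convP ρ δ u :=
  integral_nonneg fun s => mul_nonneg (psi_nonneg hδ s) (g_nonneg hρ_nonneg hδ.1 _)

lemma convP_le (hρ_smooth : ContDiff ℝ (⊤ : ℕ∞) ρ) (hρ_bdd : ∀ r, ρ r ≤ 2)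
    (hρ_nonneg : ∀ r, 0 ≤ ρ r) (hρ_supp : ∀ r, r ∉ Set.Ioo (0 : ℝ) 1 → ρ r = 0)
    (hρ_int : (∫ r, ρ r) = 1) (hδ : δ ∈ Set.Ioo (0:ℝ) 1) (u : ℝ) :
    convP ρ δ u ≤ (δ ^ 2 / 2 * |Real.log δ|)⁻¹ := by
  have h1 : Integrable (fun s => (δ ^ 2 / 2 * |Real.log δ|)⁻¹ *
      mollify ρ (δ ^ 2 / 4) (u - s)) :=
    ((g_int hρ_smooth hρ_supp hδ.1).comp_sub_left u).const_mul _
  have h2 : convP ρ δ u ≤ ∫ s, (δ ^ 2 / 2 * |Real.log δ|)⁻¹ *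
      mollify ρ (δ ^ 2 / 4) (u - s) := by
    refine integral_mono (integrand_int hρ_smooth hρ_bdd hρ_nonneg hδ u) h1 fun s => ?_
    exact mul_le_mul_of_nonneg_right (psi_le hδ s) (g_nonneg hρ_nonneg hδ.1 _)
  calc convP ρ δ u ≤ _ := h2
    _ = (δ ^ 2 / 2 * |Real.log δ|)⁻¹ := by
        rw [MeasureTheory.integral_const_mul, g_shift hρ_int hδ.1, mul_one]

lemma convP_zero (hρ_supp : ∀ r, r ∉ Set.Ioo (0 : ℝ) 1 → ρ r = 0)
    (hδ : δ ∈ Set.Ioo (0:ℝ) 1) (u : ℝ) (hu : u ≤ 0 ∨ δ ≤ u) : convP ρ δ u = 0 := by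
  have hz : (fun s => psiLog δ s * mollify ρ (δ ^ 2 / 4) (u - s)) = fun _ => 0 := by
    funext s
    by_cases h : s ∈ Set.Icc (δ ^ 2 / 2) (δ / 2)
    · rw [g_zero hρ_supp hδ.1 (u - s) ?_, mul_zero]
      rcases hu with hu | hu
      · rintro ⟨h1, -⟩
        have : (0:ℝ) < δ ^ 2 / 2 := by nlinarith [hδ.1]
        nlinarith [h.1]
      · rintro ⟨-, h2⟩
        have := h.2
        nlinarith [hδ.1, hδ.2]
    · rw [psi_zero s h, zero_mul]
  unfold convP
  rw [hz, integral_zero]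

lemma convP_cont (hρ_smooth : ContDiff ℝ (⊤ : ℕ∞) ρ)
    (hρ_supp : ∀ r, r ∉ Set.Ioo (0 : ℝ) 1 → ρ r = 0) (hδ : δ ∈ Set.Ioo (0:ℝ) 1) :
    Continuous (convP ρ δ) := by
  have h := HasCompactSupport.continuous_convolution_right
    (L := ContinuousLinearMap.lsmul ℝ ℝ) (μ := volume) (g_hcs hρ_supp hδ.1)
    ((psi_int hδ).locallyIntegrable) (g_cont hρ_smooth)
  have he : convP ρ δ = (psiLog δ ⋆[ContinuousLinearMap.lsmul ℝ ℝ, volume]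
      mollify ρ (δ ^ 2 / 4)) := by
    funext u
    rw [MeasureTheory.convolution_def]
    simp [convP, smul_eq_mul]
  rw [he]
  exact h

lemma convP_integral (hρ_smooth : ContDiff ℝ (⊤ : ℕ∞) ρ)
    (hρ_supp : ∀ r, r ∉ Set.Ioo (0 : ℝ) 1 → ρ r = 0)
    (hρ_int : (∫ r, ρ r) = 1) (hδ : δ ∈ Set.Ioo (0:ℝ) 1) :
    (∫ u, convP ρ δ u) = 1 := by
  have he : convP ρ δ = (psiLog δ ⋆[ContinuousLinearMap.lsmul ℝ ℝ, volume]
      mollify ρ (δ ^ 2 / 4)) := by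
    funext u
    rw [MeasureTheory.convolution_def]
    simp [convP, smul_eq_mul]
  rw [he, MeasureTheory.integral_convolution (ContinuousLinearMap.lsmul ℝ ℝ) (psi_int hδ) (g_int hρ_smooth hρ_supp hδ.1),
    psi_integral hδ, g_integral hρ_int hδ.1]
  simp

lemma convP_int (hρ_smooth : ContDiff ℝ (⊤ : ℕ∞) ρ)
    (hρ_supp : ∀ r, r ∉ Set.Ioo (0 : ℝ) 1 → ρ r = 0) (hδ : δ ∈ Set.Ioo (0:ℝ) 1) :
    Integrable (convP ρ δ) := by
  refine (convP_cont hρ_smooth hρ_supp hδ).integrable_of_hasCompactSupport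
    (HasCompactSupport.intro (isCompact_Icc (a := (0:ℝ)) (b := δ)) fun x hx => ?_)
  refine convP_zero hρ_supp hδ x ?_
  simp only [Set.mem_Icc, not_and_or, not_le] at hx
  rcases hx with h | h
  · exact Or.inl h.le
  · exact Or.inr h.le

end aux3

section aux4

variable {ρ : ℝ → ℝ} {δ : ℝ}

lemma convP_mul_le (hρ_smooth : ContDiff ℝ (⊤ : ℕ∞) ρ) (hρ_bdd : ∀ r, ρ r ≤ 2)
    (hρ_nonneg : ∀ r, 0 ≤ ρ r) (hρ_supp : ∀ r, r ∉ Set.Ioo (0 : ℝ) 1 → ρ r = 0)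
    (hρ_int : (∫ r, ρ r) = 1) (hδ : δ ∈ Set.Ioo (0:ℝ) 1) (u : ℝ) (hu : 0 ≤ u) :
    convP ρ δ u * u ≤ 2 * |Real.log δ|⁻¹ := by
  have hL := L_pos hδ
  have key : ∀ s : ℝ, psiLog δ s * mollify ρ (δ ^ 2 / 4) (u - s) * u ≤
      2 * |Real.log δ|⁻¹ * mollify ρ (δ ^ 2 / 4) (u - s) := by
    intro s
    by_cases hψ : psiLog δ s = 0
    · rw [hψ, zero_mul, zero_mul]
      exact mul_nonneg (by positivity) (g_nonneg hρ_nonneg hδ.1 _)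
    · by_cases hgz : mollify ρ (δ ^ 2 / 4) (u - s) = 0
      · rw [hgz, mul_zero, zero_mul, mul_zero]
      · have hsmem : s ∈ Set.Icc (δ ^ 2 / 2) (δ / 2) := by
          by_contra h
          exact hψ (psi_zero s h)
        have hgmem : u - s ∈ Set.Ioo (0:ℝ) (δ ^ 2 / 4) := by
          by_contra h
          exact hgz (g_zero hρ_supp hδ.1 (u - s) h)
        have hsp : 0 < s := lt_of_lt_of_le (by nlinarith [hδ.1]) hsmem.1
        have hu2 : u ≤ 2 * s := by nlinarith [hsmem.1, hgmem.2]
        have hψv : psiLog δ s = (s * |Real.log δ|)⁻¹ := if_pos hsmem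
        have h3 : s⁻¹ * u ≤ 2 := by
          rw [inv_mul_le_iff₀ hsp]
          linarith
        have keym : (s * |Real.log δ|)⁻¹ * u ≤ 2 * |Real.log δ|⁻¹ := by
          rw [mul_inv]
          calc s⁻¹ * |Real.log δ|⁻¹ * u = (s⁻¹ * u) * |Real.log δ|⁻¹ := by ring
            _ ≤ 2 * |Real.log δ|⁻¹ :=
              mul_le_mul_of_nonneg_right h3 (inv_nonneg.mpr hL.le)
        rw [hψv]
        nlinarith [mul_le_mul_of_nonneg_right keym (g_nonneg hρ_nonneg hδ.1 (u - s))]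
  have h1 : Integrable (fun s => psiLog δ s * mollify ρ (δ ^ 2 / 4) (u - s) * u) :=
    (integrand_int hρ_smooth hρ_bdd hρ_nonneg hδ u).mul_const u
  have h2 : Integrable (fun s => 2 * |Real.log δ|⁻¹ * mollify ρ (δ ^ 2 / 4) (u - s)) :=
    ((g_int hρ_smooth hρ_supp hδ.1).comp_sub_left u).const_mul _
  have h4 : convP ρ δ u * u = ∫ s, psiLog δ s * mollify ρ (δ ^ 2 / 4) (u - s) * u := by
    unfold convP
    exact (MeasureTheory.integral_mul_const _ _).symm
  rw [h4]
  calc (∫ s, psiLog δ s * mollify ρ (δ ^ 2 / 4) (u - s) * u)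
      ≤ ∫ s, 2 * |Real.log δ|⁻¹ * mollify ρ (δ ^ 2 / 4) (u - s) :=
        integral_mono h1 h2 key
    _ = 2 * |Real.log δ|⁻¹ := by
        rw [MeasureTheory.integral_const_mul, g_shift hρ_int hδ.1, mul_one]

end aux4

section aux5

variable {ρ : ℝ → ℝ} {δ : ℝ}

lemma E_cont (hρ_smooth : ContDiff ℝ (⊤ : ℕ∞) ρ)
    (hρ_supp : ∀ r, r ∉ Set.Ioo (0 : ℝ) 1 → ρ r = 0) (hδ : δ ∈ Set.Ioo (0:ℝ) 1) :
    Continuous (etaLogSecond ρ δ) := by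
  have : etaLogSecond ρ δ = fun r => convP ρ δ |r| := funext etaLogSecond_eq
  rw [this]
  exact (convP_cont hρ_smooth hρ_supp hδ).comp continuous_abs

lemma E_even (τ : ℝ) : etaLogSecond ρ δ (-τ) = etaLogSecond ρ δ τ := by
  simp only [etaLogSecond, abs_neg]

lemma F_odd (s : ℝ) : (∫ τ in (0:ℝ)..(-s), etaLogSecond ρ δ τ) =
    -∫ τ in (0:ℝ)..s, etaLogSecond ρ δ τ := by
  have h1 : (∫ x in (0:ℝ)..s, etaLogSecond ρ δ (-x)) =
      ∫ x in (-s)..(0:ℝ), etaLogSecond ρ δ x := by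
    simpa using intervalIntegral.integral_comp_neg (a := (0:ℝ)) (b := s) (etaLogSecond ρ δ)
  have h2 : (∫ x in (0:ℝ)..s, etaLogSecond ρ δ (-x)) =
      ∫ x in (0:ℝ)..s, etaLogSecond ρ δ x := by
    apply intervalIntegral.integral_congr
    intro x _
    exact E_even x
  rw [← h2, h1, intervalIntegral.integral_symm]

lemma F_nonneg (hρ_nonneg : ∀ r, 0 ≤ ρ r) (hδ : δ ∈ Set.Ioo (0:ℝ) 1) (s : ℝ) (hs : 0 ≤ s) :
    0 ≤ ∫ τ in (0:ℝ)..s, etaLogSecond ρ δ τ := by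
  apply intervalIntegral.integral_nonneg hs
  intro τ _
  rw [etaLogSecond_eq]
  exact convP_nonneg hρ_nonneg hδ _

lemma F_le_one (hρ_smooth : ContDiff ℝ (⊤ : ℕ∞) ρ) (hρ_nonneg : ∀ r, 0 ≤ ρ r)
    (hρ_supp : ∀ r, r ∉ Set.Ioo (0 : ℝ) 1 → ρ r = 0)
    (hρ_int : (∫ r, ρ r) = 1) (hδ : δ ∈ Set.Ioo (0:ℝ) 1) (s : ℝ) (hs : 0 ≤ s) :
    (∫ τ in (0:ℝ)..s, etaLogSecond ρ δ τ) ≤ 1 := by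
  rw [intervalIntegral.integral_of_le hs,
    setIntegral_congr_fun measurableSet_Ioc
      (fun τ hτ => by rw [etaLogSecond_eq, abs_of_pos hτ.1] : Set.EqOn (etaLogSecond ρ δ)
        (convP ρ δ) (Set.Ioc 0 s))]
  calc (∫ τ in Set.Ioc (0:ℝ) s, convP ρ δ τ) ≤ ∫ τ, convP ρ δ τ :=
        setIntegral_le_integral (convP_int hρ_smooth hρ_supp hδ)
          (Filter.Eventually.of_forall (convP_nonneg hρ_nonneg hδ))
    _ = 1 := convP_integral hρ_smooth hρ_supp hρ_int hδ

lemma F_eq_one (hρ_smooth : ContDiff ℝ (⊤ : ℕ∞) ρ)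
    (hρ_supp : ∀ r, r ∉ Set.Ioo (0 : ℝ) 1 → ρ r = 0)
    (hρ_int : (∫ r, ρ r) = 1) (hδ : δ ∈ Set.Ioo (0:ℝ) 1) (s : ℝ) (hs : δ ≤ s) :
    (∫ τ in (0:ℝ)..s, etaLogSecond ρ δ τ) = 1 := by
  have hs0 : (0:ℝ) ≤ s := le_trans hδ.1.le hs
  rw [intervalIntegral.integral_of_le hs0,
    setIntegral_congr_fun measurableSet_Ioc
      (fun τ hτ => by rw [etaLogSecond_eq, abs_of_pos hτ.1] : Set.EqOn (etaLogSecond ρ δ)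
        (convP ρ δ) (Set.Ioc 0 s))]
  have hind : convP ρ δ = (Set.Ioc (0:ℝ) s).indicator (convP ρ δ) := by
    funext t
    by_cases h : t ∈ Set.Ioc (0:ℝ) s
    · rw [Set.indicator_of_mem h]
    · rw [Set.indicator_of_notMem h]
      simp only [Set.mem_Ioc, not_and_or, not_lt, not_le] at h
      refine convP_zero hρ_supp hδ t ?_
      rcases h with h | h
      · exact Or.inl h
      · exact Or.inr (le_trans hs h.le)
  calc (∫ τ in Set.Ioc (0:ℝ) s, convP ρ δ τ)
      = ∫ τ, (Set.Ioc (0:ℝ) s).indicator (convP ρ δ) τ :=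
        (MeasureTheory.integral_indicator measurableSet_Ioc).symm
    _ = ∫ τ, convP ρ δ τ := by rw [← hind]
    _ = 1 := convP_integral hρ_smooth hρ_supp hρ_int hδ

end aux5

theorem etaLog_properties
    (ρ : ℝ → ℝ) (hρ_smooth : ContDiff ℝ (⊤ : ℕ∞) ρ) (hρ_nonneg : ∀ r, 0 ≤ ρ r)
    (hρ_bdd : ∀ r, ρ r ≤ 2) (hρ_supp : ∀ r, r ∉ Set.Ioo (0 : ℝ) 1 → ρ r = 0)
    (hρ_int : (∫ r, ρ r) = 1)
    (δ : ℝ) (hδ : δ ∈ Set.Ioo (0 : ℝ) 1) :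
    -- (a) η_δ″ vanishes outside [-δ, δ]
    (∀ r : ℝ, δ < |r| → etaLogSecond ρ δ r = 0) ∧
    -- (b) ∫ η_δ″(r - ζ) dζ = 2
    (∀ r : ℝ, (∫ ζ : ℝ, etaLogSecond ρ δ (r - ζ)) = 2) ∧
    -- (c) 0 ≤ η_δ″ ≤ 2 δ⁻² |log δ|⁻¹
    (∀ r : ℝ, 0 ≤ etaLogSecond ρ δ r ∧ etaLogSecond ρ δ r ≤ 2 * (δ ^ 2)⁻¹ * |Real.log δ|⁻¹) ∧
    -- (d) |η_δ″(r) · r| ≤ 2 |log δ|⁻¹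
    (∀ r : ℝ, |etaLogSecond ρ δ r * r| ≤ 2 * |Real.log δ|⁻¹) ∧
    -- (e) |η_δ(r) - |r|| ≤ δ
    (∀ r : ℝ, abs (etaLog ρ δ r - abs r) ≤ δ) := by
  have hδ0 := hδ.1
  have hδ1 := hδ.2
  refine ⟨?_, ?_, ?_, ?_, ?_⟩
  · -- (a)
    intro r hr
    rw [etaLogSecond_eq]
    exact convP_zero hρ_supp hδ |r| (Or.inr hr.le)
  · -- (b)
    intro r
    simp_rw [etaLogSecond_eq]
    rw [MeasureTheory.integral_sub_left_eq_self (fun t => convP ρ δ |t|) volume r]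
    have hsplit : ∀ t : ℝ, convP ρ δ |t| = convP ρ δ t + convP ρ δ (-t) := by
      intro t
      rcases lt_trichotomy t 0 with h | h | h
      · rw [abs_of_neg h, convP_zero hρ_supp hδ t (Or.inl h.le), zero_add]
      · subst h
        simp [convP_zero hρ_supp hδ 0 (Or.inl le_rfl)]
      · rw [abs_of_pos h, convP_zero hρ_supp hδ (-t) (Or.inl (by linarith)), add_zero]
    simp_rw [hsplit]
    rw [MeasureTheory.integral_add (convP_int hρ_smooth hρ_supp hδ)
      ((convP_int hρ_smooth hρ_supp hδ).comp_neg),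
      MeasureTheory.integral_neg_eq_self (convP ρ δ) volume,
      convP_integral hρ_smooth hρ_supp hρ_int hδ]
    norm_num
  · -- (c)
    intro r
    rw [etaLogSecond_eq]
    refine ⟨convP_nonneg hρ_nonneg hδ _, ?_⟩
    have hEq : (δ ^ 2 / 2 * |Real.log δ|)⁻¹ = 2 * (δ ^ 2)⁻¹ * |Real.log δ|⁻¹ := by
      rw [mul_inv, inv_div]
      ring
    rw [← hEq]
    exact convP_le hρ_smooth hρ_bdd hρ_nonneg hρ_supp hρ_int hδ _
  · -- (d)
    intro r
    rw [etaLogSecond_eq, abs_mul, abs_of_nonneg (convP_nonneg hρ_nonneg hδ _)]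
    exact convP_mul_le hρ_smooth hρ_bdd hρ_nonneg hρ_supp hρ_int hδ |r| (abs_nonneg r)
  · -- (e)
    have hFcont : Continuous (fun s => ∫ τ in (0:ℝ)..s, etaLogSecond ρ δ τ) :=
      intervalIntegral.continuous_primitive
        (fun a b => (E_cont hρ_smooth hρ_supp hδ).intervalIntegrable a b) 0
    have hGint : ∀ a b : ℝ, IntervalIntegrable
        (fun s => 1 - ∫ τ in (0:ℝ)..s, etaLogSecond ρ δ τ) volume a b :=
      fun a b => ((continuous_const.sub hFcont).intervalIntegrable a b)
    have key : ∀ r : ℝ, 0 ≤ r → abs (etaLog ρ δ r - |r|) ≤ δ := by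
      intro r hr
      rw [abs_of_nonneg hr]
      have h1 : (∫ s in (0:ℝ)..r, (1 - ∫ τ in (0:ℝ)..s, etaLogSecond ρ δ τ)) =
          r - etaLog ρ δ r := by
        rw [intervalIntegral.integral_sub (intervalIntegrable_const)
          (hFcont.intervalIntegrable 0 r)]
        simp [etaLog]
      have h2 : (0:ℝ) ≤ ∫ s in (0:ℝ)..r, (1 - ∫ τ in (0:ℝ)..s, etaLogSecond ρ δ τ) := by
        apply intervalIntegral.integral_nonneg hr
        intro s hs
        have := F_le_one hρ_smooth hρ_nonneg hρ_supp hρ_int hδ s hs.1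
        linarith
      have h3 : (∫ s in (0:ℝ)..r, (1 - ∫ τ in (0:ℝ)..s, etaLogSecond ρ δ τ)) ≤ δ := by
        have hbd : ∀ c : ℝ, 0 ≤ c → c ≤ δ →
            (∫ s in (0:ℝ)..c, (1 - ∫ τ in (0:ℝ)..s, etaLogSecond ρ δ τ)) ≤ δ := by
          intro c hc0 hcδ
          calc (∫ s in (0:ℝ)..c, (1 - ∫ τ in (0:ℝ)..s, etaLogSecond ρ δ τ))
              ≤ ∫ _ in (0:ℝ)..c, (1:ℝ) := by
                apply intervalIntegral.integral_mono_on hc0 (hGint 0 c)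
                  intervalIntegrable_const
                intro s hs
                have := F_nonneg hρ_nonneg hδ s hs.1
                linarith
            _ = c := by simp
            _ ≤ δ := hcδ
        rcases le_or_gt r δ with h | h
        · exact hbd r hr h
        · rw [← intervalIntegral.integral_add_adjacent_intervals (hGint 0 δ) (hGint δ r)]
          have hzero : (∫ s in δ..r, (1 - ∫ τ in (0:ℝ)..s, etaLogSecond ρ δ τ)) = 0 := by
            have : (∫ s in δ..r, (1 - ∫ τ in (0:ℝ)..s, etaLogSecond ρ δ τ)) =
                ∫ _ in δ..r, (0:ℝ) := by
              apply intervalIntegral.integral_congr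
              intro s hs
              rw [Set.uIcc_of_le h.le] at hs
              show 1 - (∫ τ in (0:ℝ)..s, etaLogSecond ρ δ τ) = (0:ℝ)
              rw [F_eq_one hρ_smooth hρ_supp hρ_int hδ s hs.1, sub_self]
            rw [this, intervalIntegral.integral_zero]
          rw [hzero, add_zero]
          exact hbd δ hδ0.le le_rfl
      rw [abs_sub_comm, abs_of_nonneg (by linarith), ← h1]
      exact h3
    intro r
    rcases le_or_gt 0 r with hr | hr
    · exact key r hr
    · have heven : etaLog ρ δ (-r) = etaLog ρ δ r := by
        have h1 : (∫ x in (0:ℝ)..(-r), (∫ τ in (0:ℝ)..(-x), etaLogSecond ρ δ τ)) =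
            ∫ x in r..(0:ℝ), (∫ τ in (0:ℝ)..x, etaLogSecond ρ δ τ) := by
          have := intervalIntegral.integral_comp_neg (a := (0:ℝ)) (b := -r)
            (fun x => ∫ τ in (0:ℝ)..x, etaLogSecond ρ δ τ)
          simpa using this
        have h2 : (∫ x in (0:ℝ)..(-r), (∫ τ in (0:ℝ)..(-x), etaLogSecond ρ δ τ)) =
            ∫ x in (0:ℝ)..(-r), -(∫ τ in (0:ℝ)..x, etaLogSecond ρ δ τ) :=
          intervalIntegral.integral_congr (fun x _ => F_odd x)
        have h3 : (∫ x in (0:ℝ)..(-r), -(∫ τ in (0:ℝ)..x, etaLogSecond ρ δ τ)) =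
            -(∫ x in (0:ℝ)..(-r), (∫ τ in (0:ℝ)..x, etaLogSecond ρ δ τ)) :=
          intervalIntegral.integral_neg
        have h4 : (∫ x in r..(0:ℝ), (∫ τ in (0:ℝ)..x, etaLogSecond ρ δ τ)) =
            -(∫ x in (0:ℝ)..r, (∫ τ in (0:ℝ)..x, etaLogSecond ρ δ τ)) :=
          intervalIntegral.integral_symm 0 r
        unfold etaLog
        linarith [h1, h2, h3, h4]
      rw [← heven, ← abs_neg r]
      exact key (-r) (by linarith)
end

section
/- Let m > 1, K ≥ 1, and let 𝔞 : ℝ → ℝ be even and differentiable on (0,∞) with |𝔞′(r)| ≤ K r^{(m−3)/2} for all r > 0. Then there is a constant N depending only on K and m such that for every δ > 0 and all r, ζ ∈ ℝ with |r − ζ| ≤ δ and |ζ| ≥ 2δ one has |𝔞(r) − 𝔞(ζ)| ≤ N δ |ζ|^{(m−3)/2}. -/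
theorem modulus_near_diagonal (m K : ℝ) (hm : 1 < m) (hK : 1 ≤ K) :
    ∃ N : ℝ, ∀ a : ℝ → ℝ,
      (∀ r : ℝ, a (-r) = a r) →
      (∀ r : ℝ, 0 < r → DifferentiableAt ℝ a r) →
      (∀ r : ℝ, 0 < r → |deriv a r| ≤ K * r ^ ((m - 3) / 2)) →
      ∀ δ : ℝ, 0 < δ → ∀ r ζ : ℝ, |r - ζ| ≤ δ → 2 * δ ≤ |ζ| →
        |a r - a ζ| ≤ N * δ * |ζ| ^ ((m - 3) / 2) := by
  set e := (m - 3) / 2 with he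
  refine ⟨K * 2 ^ |e|, ?_⟩
  intro a haev hdiff hbound δ hδ r ζ hrζ hζ
  have key : ∀ r ζ : ℝ, |r - ζ| ≤ δ → 2 * δ ≤ ζ →
      |a r - a ζ| ≤ K * 2 ^ |e| * δ * ζ ^ e := by
    intro r ζ hrζ hζ
    have hζpos : 0 < ζ := by linarith
    have hmem : ∀ x ∈ Set.Icc (ζ - δ) (ζ + δ), 0 < x := by
      intro x hx; have := hx.1; linarith
    have hCbound : ∀ x ∈ Set.Icc (ζ - δ) (ζ + δ), x ^ e ≤ 2 ^ |e| * ζ ^ e := by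
      intro x hx
      rcases le_or_gt 0 e with h0 | h0
      · have h1 : x ^ e ≤ (2 * ζ) ^ e :=
          Real.rpow_le_rpow (hmem x hx).le (by have := hx.2; linarith) h0
        calc x ^ e ≤ (2 * ζ) ^ e := h1
          _ = 2 ^ e * ζ ^ e := Real.mul_rpow (by norm_num) hζpos.le
          _ = 2 ^ |e| * ζ ^ e := by rw [abs_of_nonneg h0]
      · have h1 : x ^ e ≤ (ζ / 2) ^ e :=
          Real.rpow_le_rpow_of_nonpos (by linarith) (by have := hx.1; linarith) h0.le
        calc x ^ e ≤ (ζ / 2) ^ e := h1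
          _ = 2 ^ |e| * ζ ^ e := by
              have h2e : (0:ℝ) < 2 ^ e := Real.rpow_pos_of_pos two_pos e
              rw [abs_of_neg h0, Real.rpow_neg (by norm_num : (0:ℝ) ≤ 2),
                Real.div_rpow hζpos.le (by norm_num : (0:ℝ) ≤ 2)]
              field_simp
    have hmvt := Convex.norm_image_sub_le_of_norm_deriv_le
      (f := a) (C := K * (2 ^ |e| * ζ ^ e)) (s := Set.Icc (ζ - δ) (ζ + δ))
      (fun x hx => hdiff x (hmem x hx))
      (fun x hx => by
        calc ‖deriv a x‖ = |deriv a x| := rfl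
          _ ≤ K * x ^ e := hbound x (hmem x hx)
          _ ≤ K * (2 ^ |e| * ζ ^ e) := by
              have := hCbound x hx
              nlinarith)
      (convex_Icc _ _)
      (Set.mem_Icc.2 ⟨by linarith, by linarith⟩)
      (by
        rw [abs_sub_comm] at hrζ
        rw [abs_le] at hrζ
        exact Set.mem_Icc.2 ⟨by linarith [hrζ.1], by linarith [hrζ.2]⟩)
    have h2 : ‖a r - a ζ‖ ≤ K * (2 ^ |e| * ζ ^ e) * ‖r - ζ‖ := hmvt
    have hnorm : ‖r - ζ‖ ≤ δ := hrζ
    have hpos : 0 ≤ K * (2 ^ |e| * ζ ^ e) := by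
      have h1 : (0:ℝ) < 2 ^ |e| := Real.rpow_pos_of_pos (by norm_num) _
      have h2 : (0:ℝ) < ζ ^ e := Real.rpow_pos_of_pos hζpos _
      have hK0 : (0:ℝ) < K := lt_of_lt_of_le one_pos hK
      exact mul_nonneg hK0.le (mul_nonneg h1.le h2.le)
    calc |a r - a ζ| = ‖a r - a ζ‖ := rfl
      _ ≤ K * (2 ^ |e| * ζ ^ e) * ‖r - ζ‖ := h2
      _ ≤ K * (2 ^ |e| * ζ ^ e) * δ := by
          exact mul_le_mul_of_nonneg_left hnorm hpos
      _ = K * 2 ^ |e| * δ * ζ ^ e := by ring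
  rcases le_or_gt 0 ζ with h | h
  · have := key r ζ hrζ (by rwa [abs_of_nonneg h] at hζ)
    rwa [abs_of_nonneg h]
  · have h1 : |(-r) - (-ζ)| ≤ δ := by
      rw [show (-r) - (-ζ) = -(r - ζ) by ring, abs_neg]; exact hrζ
    have h2 := key (-r) (-ζ) h1 (by rwa [abs_of_neg h] at hζ)
    rw [haev r, haev ζ] at h2
    rwa [abs_of_neg h]
end

section
/- Let m > 1, K ≥ 1, and let 𝔞 : ℝ → ℝ be even, continuous, differentiable on (0,∞), with |𝔞′(r)| ≤ K r^{(m−3)/2} for all r > 0. Then there is a constant N depending only on K and m such that for every δ > 0 and all r, ζ ∈ ℝ with |r − ζ| ≤ δ one has |𝔞(r) − 𝔞(ζ)| ≤ N (|ζ| ∨ δ)^{(m−1)/2}. -/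
theorem modulus_global (m K : ℝ) (hm : 1 < m) (hK : 1 ≤ K) :
    ∃ N : ℝ, ∀ a : ℝ → ℝ,
      (∀ r : ℝ, a (-r) = a r) →
      Continuous a →
      (∀ r : ℝ, 0 < r → DifferentiableAt ℝ a r) →
      (∀ r : ℝ, 0 < r → |deriv a r| ≤ K * r ^ ((m - 3) / 2)) →
      ∀ δ : ℝ, 0 < δ → ∀ r ζ : ℝ, |r - ζ| ≤ δ →
        |a r - a ζ| ≤ N * (max |ζ| δ) ^ ((m - 1) / 2) := by
  set p : ℝ := (m - 1) / 2 with hp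
  have hp0 : 0 < p := div_pos (by linarith) two_pos
  have hm1 : (0:ℝ) < m - 1 := by linarith
  set C : ℝ := 2 * K / (m - 1) with hC
  have hC0 : 0 < C := by positivity
  refine ⟨C * (2:ℝ) ^ p, ?_⟩
  intro a heven hcont hdiff hbound δ hδ r ζ hrζ
  -- continuity of rpow
  have hrpow_cont : Continuous (fun x : ℝ => x ^ p) := by
    rw [continuous_iff_continuousAt]
    intro x
    exact Real.continuousAt_rpow_const x p (Or.inr hp0.le)
  have hderiv : ∀ x : ℝ, 0 < x →
      HasDerivAt (fun y : ℝ => C * y ^ p) (K * x ^ ((m - 3) / 2)) x := by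
    intro x hx
    have h1 : HasDerivAt (fun y : ℝ => y ^ p) (p * x ^ (p - 1)) x :=
      Real.hasDerivAt_rpow_const (Or.inl hx.ne')
    have h2 := h1.const_mul C
    have heq : C * (p * x ^ (p - 1)) = K * x ^ ((m - 3) / 2) := by
      have : p - 1 = (m - 3) / 2 := by rw [hp]; ring
      rw [this, hC]
      field_simp
      ring
    rwa [heq] at h2
  -- monotone facts
  have hmono : ∀ f : ℝ → ℝ, (∀ s : ℝ, f (-s) = f s) → Continuous f →
      (∀ s : ℝ, 0 < s → DifferentiableAt ℝ f s) →
      (∀ s : ℝ, 0 < s → |deriv f s| ≤ K * s ^ ((m - 3) / 2)) →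
      MonotoneOn (fun y : ℝ => f y + C * y ^ p) (Set.Ici 0) := by
    intro f _ hfc hfd hfb
    apply monotoneOn_of_deriv_nonneg (convex_Ici 0)
    · exact (hfc.add (continuous_const.mul hrpow_cont)).continuousOn
    · intro x hx
      rw [interior_Ici] at hx
      exact ((hfd x hx).add (hderiv x hx).differentiableAt).differentiableWithinAt
    · intro x hx
      rw [interior_Ici] at hx
      have h1 : HasDerivAt (fun y : ℝ => f y + C * y ^ p)
          (deriv f x + K * x ^ ((m - 3) / 2)) x :=
        (hfd x hx).hasDerivAt.add (hderiv x hx)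
      rw [h1.deriv]
      have := hfb x hx
      have h2 : -(K * x ^ ((m - 3) / 2)) ≤ deriv f x := by
        have := neg_abs_le (deriv f x)
        linarith
      linarith
  have key : ∀ x y : ℝ, 0 ≤ x → x ≤ y → |a y - a x| ≤ C * y ^ p := by
    intro x y hx hxy
    have hy : 0 ≤ y := hx.trans hxy
    have hA : MonotoneOn (fun y : ℝ => a y + C * y ^ p) (Set.Ici 0) :=
      hmono a heven hcont hdiff hbound
    have hB : MonotoneOn (fun y : ℝ => (fun s => -a s) y + C * y ^ p) (Set.Ici 0) := by
      apply hmono (fun s => -a s)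
      · intro s; simp [heven s]
      · exact hcont.neg
      · intro s hs; exact (hdiff s hs).neg
      · intro s hs
        have : deriv (fun s => -a s) s = -deriv a s := deriv.neg
        rw [this, abs_neg]; exact hbound s hs
    have e1 := hA hx (Set.mem_Ici.mpr hy) hxy
    have e2 := hB hx (Set.mem_Ici.mpr hy) hxy
    simp only at e1 e2
    have hxp : 0 ≤ x ^ p := Real.rpow_nonneg hx p
    rw [abs_sub_le_iff]
    constructor <;> nlinarith [hC0.le]
  -- assemble
  set M : ℝ := max |ζ| δ with hM
  have hM0 : 0 < M := lt_max_of_lt_right hδ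
  have hrle : |r| ≤ 2 * M := by
    have : |r| ≤ |ζ| + δ := by
      calc |r| = |ζ + (r - ζ)| := by ring_nf
        _ ≤ |ζ| + |r - ζ| := abs_add_le _ _
        _ ≤ |ζ| + δ := by linarith
    calc |r| ≤ |ζ| + δ := this
      _ ≤ M + M := add_le_add (le_max_left _ _) (le_max_right _ _)
      _ = 2 * M := by ring
  have hζle : |ζ| ≤ 2 * M := (le_max_left _ _).trans (by linarith)
  have har : a |r| = a r := by
    rcases le_or_gt 0 r with h | h
    · rw [abs_of_nonneg h]
    · rw [abs_of_neg h, heven]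
  have haζ : a |ζ| = a ζ := by
    rcases le_or_gt 0 ζ with h | h
    · rw [abs_of_nonneg h]
    · rw [abs_of_neg h, heven]
  have main : |a r - a ζ| ≤ C * (2 * M) ^ p := by
    rcases le_total |r| |ζ| with h | h
    · have := key |r| |ζ| (abs_nonneg r) h
      rw [har, haζ, abs_sub_comm] at this
      refine this.trans ?_
      exact mul_le_mul_of_nonneg_left
        (Real.rpow_le_rpow (abs_nonneg ζ) hζle hp0.le) hC0.le
    · have := key |ζ| |r| (abs_nonneg ζ) h
      rw [har, haζ] at this
      refine this.trans ?_
      exact mul_le_mul_of_nonneg_left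
        (Real.rpow_le_rpow (abs_nonneg r) hrle hp0.le) hC0.le
  calc |a r - a ζ| ≤ C * (2 * M) ^ p := main
    _ = C * 2 ^ p * M ^ p := by
        rw [Real.mul_rpow (by norm_num) hM0.le]; ring
end

section
/- Let m > 1, K ≥ 1, and let 𝔞 : ℝ → ℝ be even, continuous, differentiable on (0,∞), with |𝔞′(r)| ≤ K r^{(m−3)/2} for all r > 0. Then for every α ∈ [0,1] there is a constant N depending only on K, m and α such that for every δ > 0 and all r, ζ ∈ ℝ with |r − ζ| ≤ δ and |ζ| ≥ 2δ one has |𝔞(r) − 𝔞(ζ)| ≤ N δ^α |ζ|^{(m−1)/2 − α}. -/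
/-!
Near a point `ζ` with `|ζ| ≥ 2δ` the whole segment between `r` and `ζ` stays in
`[|ζ|/2, 2|ζ|]`, where `r ^ ((m - 3) / 2)` is comparable to `|ζ| ^ ((m - 3) / 2)`. The mean value
theorem therefore gives `|𝔞 r - 𝔞 ζ| ≲ δ |ζ| ^ ((m - 3) / 2)`, and `δ ≤ δ ^ α |ζ| ^ (1 - α)`
interpolates this to the claimed bound. Evenness reduces negative `ζ` to positive ones.
-/

open Set

namespace Real

lemma rpow_le_two_rpow_abs_mul_rpow {x ζ : ℝ} (e : ℝ) (hζ : 0 < ζ) (hx₁ : ζ / 2 ≤ x)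
    (hx₂ : x ≤ 2 * ζ) : x ^ e ≤ 2 ^ |e| * ζ ^ e := by
  have hx : 0 < x := by linarith
  rcases le_or_gt 0 e with he | he
  · calc x ^ e ≤ (2 * ζ) ^ e := rpow_le_rpow hx.le hx₂ he
      _ = 2 ^ |e| * ζ ^ e := by rw [mul_rpow zero_le_two hζ.le, abs_of_nonneg he]
  · calc x ^ e ≤ (ζ / 2) ^ e := rpow_le_rpow_of_nonpos (by linarith) hx₁ he.le
      _ = 2 ^ |e| * ζ ^ e := by
        rw [div_rpow hζ.le zero_le_two, abs_of_neg he, rpow_neg zero_le_two, div_eq_inv_mul]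

lemma le_rpow_mul_rpow_one_sub {δ ζ α : ℝ} (hδ : 0 < δ) (hδζ : δ ≤ ζ) (hα : α ≤ 1) :
    δ ≤ δ ^ α * ζ ^ (1 - α) :=
  calc δ = δ ^ α * δ ^ (1 - α) := by rw [← rpow_add hδ, add_sub_cancel, rpow_one]
    _ ≤ δ ^ α * ζ ^ (1 - α) := by gcongr

end Real

open Real

lemma abs_sub_le_of_abs_deriv_le_rpow {a : ℝ → ℝ} {K e δ r ζ : ℝ}
    (hdiff : ∀ x : ℝ, 0 < x → DifferentiableAt ℝ a x)
    (hderiv : ∀ x : ℝ, 0 < x → |deriv a x| ≤ K * x ^ e)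
    (hδ : 0 < δ) (hrζ : |r - ζ| ≤ δ) (hζ : 2 * δ ≤ ζ) :
    |a r - a ζ| ≤ K * 2 ^ |e| * ζ ^ e * δ := by
  have hζ₀ : 0 < ζ := by linarith
  have hsegment : ∀ x ∈ Icc (ζ - δ) (ζ + δ), ζ / 2 ≤ x ∧ x ≤ 2 * ζ := fun x hx ↦
    ⟨by linarith [hx.1], by linarith [hx.2]⟩
  have hpos : ∀ x ∈ Icc (ζ - δ) (ζ + δ), 0 < x := fun x hx ↦ by linarith [hsegment x hx]
  have hbound : ∀ x ∈ Icc (ζ - δ) (ζ + δ), ‖deriv a x‖ ≤ K * 2 ^ |e| * ζ ^ e := fun x hx ↦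
    calc ‖deriv a x‖ ≤ K * x ^ e := hderiv x (hpos x hx)
      _ ≤ K * (2 ^ |e| * ζ ^ e) := by
        have hK : 0 ≤ K := nonneg_of_mul_nonneg_left ((abs_nonneg _).trans (hderiv x (hpos x hx)))
          (rpow_pos_of_pos (hpos x hx) e)
        gcongr
        exact rpow_le_two_rpow_abs_mul_rpow e hζ₀ (hsegment x hx).1 (hsegment x hx).2
      _ = K * 2 ^ |e| * ζ ^ e := by ring
  have hζmem : ζ ∈ Icc (ζ - δ) (ζ + δ) := ⟨by linarith, by linarith⟩
  have hrmem : r ∈ Icc (ζ - δ) (ζ + δ) := by rwa [← closedBall_eq_Icc]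
  have hC : 0 ≤ K * 2 ^ |e| * ζ ^ e := (norm_nonneg _).trans (hbound ζ hζmem)
  calc |a r - a ζ| ≤ K * 2 ^ |e| * ζ ^ e * |r - ζ| :=
        (convex_Icc _ _).norm_image_sub_le_of_norm_deriv_le
          (fun x hx ↦ hdiff x (hpos x hx)) hbound hζmem hrmem
    _ ≤ K * 2 ^ |e| * ζ ^ e * δ := by gcongr

lemma abs_sub_le_interpolated_of_abs_deriv_le_rpow {a : ℝ → ℝ} {K e α δ r ζ : ℝ}
    (hdiff : ∀ x : ℝ, 0 < x → DifferentiableAt ℝ a x)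
    (hderiv : ∀ x : ℝ, 0 < x → |deriv a x| ≤ K * x ^ e)
    (hα : α ≤ 1) (hδ : 0 < δ) (hrζ : |r - ζ| ≤ δ) (hζ : 2 * δ ≤ ζ) :
    |a r - a ζ| ≤ K * 2 ^ |e| * δ ^ α * ζ ^ (e + 1 - α) := by
  have hlip := abs_sub_le_of_abs_deriv_le_rpow hdiff hderiv hδ hrζ hζ
  have hC : 0 ≤ K * 2 ^ |e| * ζ ^ e :=
    nonneg_of_mul_nonneg_left ((abs_nonneg _).trans hlip) hδ
  calc |a r - a ζ| ≤ K * 2 ^ |e| * ζ ^ e * (δ ^ α * ζ ^ (1 - α)) :=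
        hlip.trans (by gcongr; exact le_rpow_mul_rpow_one_sub hδ (by linarith) hα)
    _ = K * 2 ^ |e| * δ ^ α * ζ ^ (e + 1 - α) := by
        rw [add_sub_assoc, rpow_add (by linarith)]
        ring

theorem modulus_interpolated_general (m K : ℝ) :
    ∀ α : ℝ, α ∈ Set.Icc (0 : ℝ) 1 →
    ∃ N : ℝ, ∀ a : ℝ → ℝ,
      (∀ r : ℝ, a (-r) = a r) →
      Continuous a →
      (∀ r : ℝ, 0 < r → DifferentiableAt ℝ a r) →
      (∀ r : ℝ, 0 < r → |deriv a r| ≤ K * r ^ ((m - 3) / 2)) →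
      ∀ δ : ℝ, 0 < δ → ∀ r ζ : ℝ, |r - ζ| ≤ δ → 2 * δ ≤ |ζ| →
        |a r - a ζ| ≤ N * δ ^ α * |ζ| ^ ((m - 1) / 2 - α) := by
  intro α hα
  refine ⟨K * 2 ^ |(m - 3) / 2|, fun a heven _ hdiff hderiv δ hδ r ζ hrζ hζ ↦ ?_⟩
  have hpositive : ∀ r ζ, |r - ζ| ≤ δ → 2 * δ ≤ ζ →
      |a r - a ζ| ≤ K * 2 ^ |(m - 3) / 2| * δ ^ α * ζ ^ ((m - 1) / 2 - α) := by
    intro r ζ hrζ hζ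
    convert abs_sub_le_interpolated_of_abs_deriv_le_rpow hdiff hderiv hα.2 hδ hrζ hζ using 3
    ring
  rcases le_or_gt 0 ζ with hζ₀ | hζ₀
  · rw [abs_of_nonneg hζ₀] at hζ ⊢
    exact hpositive r ζ hrζ hζ
  · rw [abs_of_neg hζ₀] at hζ ⊢
    rw [← heven r, ← heven ζ]
    exact hpositive (-r) (-ζ) (by rwa [neg_sub_neg, abs_sub_comm]) hζ

theorem modulus_interpolated (m K : ℝ) (hm : 1 < m) (hK : 1 ≤ K) :
    ∀ α : ℝ, α ∈ Set.Icc (0 : ℝ) 1 →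
    ∃ N : ℝ, ∀ a : ℝ → ℝ,
      (∀ r : ℝ, a (-r) = a r) →
      Continuous a →
      (∀ r : ℝ, 0 < r → DifferentiableAt ℝ a r) →
      (∀ r : ℝ, 0 < r → |deriv a r| ≤ K * r ^ ((m - 3) / 2)) →
      ∀ δ : ℝ, 0 < δ → ∀ r ζ : ℝ, |r - ζ| ≤ δ → 2 * δ ≤ |ζ| →
        |a r - a ζ| ≤ N * δ ^ α * |ζ| ^ ((m - 1) / 2 - α) :=
  modulus_interpolated_general m K
end

section
/- Let m > 1 and N₀ ≥ 1, and let 𝔞, 𝔞̃ : ℝ → ℝ be even measurable functions with |𝔞(ζ)| + |𝔞̃(ζ)| ≤ N₀ (1 + |ζ|^{(m−1)/2}) for all ζ. For λ ∈ [0,1] set R_λ := sup { R ∈ [0,∞] : |𝔞(r) − 𝔞̃(r)| ≤ λ for all |r| < R }. Then there is a constant N depending only on N₀ and m such that for all a, b ∈ ℝ one has ∫_{a∧b}^{a∨b} |𝔞(ζ) − 𝔞̃(ζ)|² dζ ≤ N [ λ² (|a| + |b|) + 1_{|a| ≥ R_λ} (1 + |a|^m) + 1_{|b| ≥ R_λ}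 (1 + |b|^m) ]. -/
open MeasureTheory intervalIntegral ENNReal
open scoped Classical

/-- `R_λ`: the supremum of radii `R ∈ [0,∞]` such that `|𝔞(r) − 𝔞̃(r)| ≤ λ` for all `|r| < R`. -/
noncomputable def Rlam (a a' : ℝ → ℝ) (lam : ℝ) : ℝ≥0∞ :=
  sSup {R : ℝ≥0∞ | ∀ r : ℝ, ENNReal.ofReal |r| < R → |a r - a' r| ≤ lam}

lemma Rlam_spec {a a' : ℝ → ℝ} {lam : ℝ} {r : ℝ}
    (h : ENNReal.ofReal |r| < Rlam a a' lam) : |a r - a' r| ≤ lam := by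
  rw [Rlam, lt_sSup_iff] at h
  obtain ⟨R, hR, hlt⟩ := h
  exact hR r hlt

theorem doubling_error_D2 (m N₀ : ℝ) (hm : 1 < m) (hN₀ : 1 ≤ N₀) :
    ∃ N : ℝ, ∀ a a' : ℝ → ℝ, Measurable a → Measurable a' →
      (∀ r : ℝ, a (-r) = a r) → (∀ r : ℝ, a' (-r) = a' r) →
      (∀ ζ : ℝ, |a ζ| + |a' ζ| ≤ N₀ * (1 + |ζ| ^ ((m - 1) / 2))) →
      ∀ lam : ℝ, lam ∈ Set.Icc (0 : ℝ) 1 →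
      ∀ x y : ℝ,
        (∫ ζ in (min x y)..(max x y), |a ζ - a' ζ| ^ 2)
          ≤ N * (lam ^ 2 * (|x| + |y|)
            + (if Rlam a a' lam ≤ ENNReal.ofReal |x| then (1 : ℝ) else 0) * (1 + |x| ^ m)
            + (if Rlam a a' lam ≤ ENNReal.ofReal |y| then (1 : ℝ) else 0) * (1 + |y| ^ m)) := by
  refine ⟨8 * N₀ ^ 2, ?_⟩
  intro a a' ha ha' hev hev' hgrow lam hlam x y
  set M : ℝ := max |x| |y| with hMdef
  have hM0 : 0 ≤ M := le_max_of_le_left (abs_nonneg x)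
  have hxM : |x| ≤ M := le_max_left _ _
  have hyM : |y| ≤ M := le_max_right _ _
  have habs : ∀ ζ ∈ Set.uIoc (min x y) (max x y), |ζ| ≤ M := by
    intro ζ hζ
    rw [Set.uIoc_of_le min_le_max] at hζ
    have h1 : min x y ≤ ζ := le_of_lt hζ.1
    have h2 : ζ ≤ max x y := hζ.2
    have h3 := abs_le_max_abs_abs h1 h2
    rcases le_total x y with h | h
    · rwa [min_eq_left h, max_eq_right h] at h3
    · rwa [min_eq_right h, max_eq_left h, max_comm] at h3
  have hsub : |max x y - min x y| ≤ |x| + |y| := by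
    rw [max_sub_min_eq_abs, abs_abs, abs_sub_comm]
    exact abs_sub _ _
  have key : ∀ C : ℝ, 0 ≤ C → (∀ ζ ∈ Set.uIoc (min x y) (max x y), |a ζ - a' ζ| ^ 2 ≤ C) →
      (∫ ζ in (min x y)..(max x y), |a ζ - a' ζ| ^ 2) ≤ C * (|x| + |y|) := by
    intro C hC0 hC
    calc (∫ ζ in (min x y)..(max x y), |a ζ - a' ζ| ^ 2)
        ≤ ‖∫ ζ in (min x y)..(max x y), |a ζ - a' ζ| ^ 2‖ := le_abs_self _
      _ ≤ C * |max x y - min x y| := by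
          apply intervalIntegral.norm_integral_le_of_norm_le_const
          intro ζ hζ
          rw [Real.norm_eq_abs, abs_of_nonneg (by positivity)]
          exact hC ζ hζ
      _ ≤ C * (|x| + |y|) := mul_le_mul_of_nonneg_left hsub hC0
  have hxm0 : (0:ℝ) ≤ |x| ^ m := Real.rpow_nonneg (abs_nonneg x) m
  have hym0 : (0:ℝ) ≤ |y| ^ m := Real.rpow_nonneg (abs_nonneg y) m
  rcases em (Rlam a a' lam ≤ ENNReal.ofReal |x| ∨ Rlam a a' lam ≤ ENNReal.ofReal |y|)
    with hbig | hsmall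
  · -- big case: crude growth bound
    have hMm1 : (0:ℝ) ≤ M ^ (m-1) := Real.rpow_nonneg hM0 _
    have hMm0 : (0:ℝ) ≤ M ^ m := Real.rpow_nonneg hM0 _
    have hC0 : (0:ℝ) ≤ 2 * N₀ ^ 2 * (1 + M ^ (m-1)) := by positivity
    have hMm : M * M ^ (m-1) = M ^ m := by
      rcases hM0.eq_or_lt with h | h
      · rw [← h, Real.zero_rpow (by linarith), Real.zero_rpow (by linarith), mul_zero]
      · have h2 : M ^ ((1:ℝ) + (m-1)) = M ^ (1:ℝ) * M ^ (m-1) := Real.rpow_add h 1 (m-1)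
        rw [Real.rpow_one] at h2
        rw [← h2]
        congr 1
        ring
    have hM1m : M ≤ 1 + M ^ m := by
      rcases le_total M 1 with h | h
      · linarith
      · have h2 : M ^ (1:ℝ) ≤ M ^ m := Real.rpow_le_rpow_of_exponent_le h (by linarith)
        rw [Real.rpow_one] at h2
        linarith
    have hbound : ∀ ζ ∈ Set.uIoc (min x y) (max x y),
        |a ζ - a' ζ| ^ 2 ≤ 2 * N₀ ^ 2 * (1 + M ^ (m-1)) := by
      intro ζ hζ
      set t : ℝ := |ζ| ^ ((m-1)/2) with ht
      have ht0 : 0 ≤ t := Real.rpow_nonneg (abs_nonneg ζ) _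
      have h1 : |a ζ - a' ζ| ≤ N₀ * (1 + t) := le_trans (abs_sub _ _) (hgrow ζ)
      have h2 : |a ζ - a' ζ| ^ 2 ≤ (N₀ * (1 + t)) ^ 2 :=
        pow_le_pow_left₀ (abs_nonneg _) h1 2
      have ht2 : t ^ 2 = |ζ| ^ (m-1) := by
        rw [ht, ← Real.rpow_natCast (|ζ| ^ ((m-1)/2)) 2, ← Real.rpow_mul (abs_nonneg ζ)]
        norm_num
      have h3 : |ζ| ^ (m-1) ≤ M ^ (m-1) :=
        Real.rpow_le_rpow (abs_nonneg ζ) (habs ζ hζ) (by linarith)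
      nlinarith [sq_nonneg (1 - t), sq_nonneg N₀, mul_le_mul_of_nonneg_left h3
        (by positivity : (0:ℝ) ≤ 2 * N₀ ^ 2)]
    have hsum : 1 + M ^ m ≤
        (if Rlam a a' lam ≤ ENNReal.ofReal |x| then (1 : ℝ) else 0) * (1 + |x| ^ m)
        + (if Rlam a a' lam ≤ ENNReal.ofReal |y| then (1 : ℝ) else 0) * (1 + |y| ^ m) := by
      by_cases hx : Rlam a a' lam ≤ ENNReal.ofReal |x| <;>
        by_cases hy : Rlam a a' lam ≤ ENNReal.ofReal |y|
      · rw [if_pos hx, if_pos hy]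
        have h : M ^ m ≤ |x| ^ m + |y| ^ m := by
          rcases max_cases |x| |y| with ⟨h, _⟩ | ⟨h, _⟩ <;> rw [hMdef, h] <;> linarith
        linarith
      · rw [if_pos hx, if_neg hy]
        have hyx : |y| ≤ |x| := by
          by_contra h
          exact hy (hx.trans (ENNReal.ofReal_le_ofReal (le_of_lt (not_le.mp h))))
        rw [hMdef, max_eq_left hyx]
        linarith
      · rw [if_neg hx, if_pos hy]
        have hxy : |x| ≤ |y| := by
          by_contra h
          exact hx (hy.trans (ENNReal.ofReal_le_ofReal (le_of_lt (not_le.mp h))))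
        rw [hMdef, max_eq_right hxy]
        linarith
      · exact absurd hbig (by simp [hx, hy])
    have hl : 0 ≤ lam ^ 2 * (|x| + |y|) := by positivity
    have hN2 : (0:ℝ) ≤ 8 * N₀ ^ 2 := by positivity
    calc (∫ ζ in (min x y)..(max x y), |a ζ - a' ζ| ^ 2)
        ≤ 2 * N₀ ^ 2 * (1 + M ^ (m-1)) * (|x| + |y|) := key _ hC0 hbound
      _ ≤ 8 * N₀ ^ 2 * (1 + M ^ m) := by
          nlinarith [mul_le_mul_of_nonneg_left (by linarith : |x| + |y| ≤ 2 * M) hC0,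
            sq_nonneg N₀, hMm, hM1m]
      _ ≤ 8 * N₀ ^ 2 * (lam ^ 2 * (|x| + |y|)
            + (if Rlam a a' lam ≤ ENNReal.ofReal |x| then (1 : ℝ) else 0) * (1 + |x| ^ m)
            + (if Rlam a a' lam ≤ ENNReal.ofReal |y| then (1 : ℝ) else 0) * (1 + |y| ^ m)) := by
          nlinarith [mul_le_mul_of_nonneg_left hsum hN2, mul_nonneg hN2 hl]
  · -- small case: λ-bound
    push_neg at hsmall
    obtain ⟨hx, hy⟩ := hsmall
    have hMlt : ENNReal.ofReal M < Rlam a a' lam := by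
      rcases max_cases |x| |y| with ⟨h, _⟩ | ⟨h, _⟩ <;> rw [hMdef, h]
      · exact hx
      · exact hy
    have hbound : ∀ ζ ∈ Set.uIoc (min x y) (max x y), |a ζ - a' ζ| ^ 2 ≤ lam ^ 2 := by
      intro ζ hζ
      have h1 : ENNReal.ofReal |ζ| < Rlam a a' lam :=
        lt_of_le_of_lt (ENNReal.ofReal_le_ofReal (habs ζ hζ)) hMlt
      exact pow_le_pow_left₀ (abs_nonneg _) (Rlam_spec h1) 2
    rw [if_neg (not_le.mpr hx), if_neg (not_le.mpr hy)]
    have h2 : (1:ℝ) ≤ 8 * N₀ ^ 2 := by nlinarith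
    have hl : 0 ≤ lam ^ 2 * (|x| + |y|) := by positivity
    calc (∫ ζ in (min x y)..(max x y), |a ζ - a' ζ| ^ 2)
        ≤ lam ^ 2 * (|x| + |y|) := key _ (sq_nonneg lam) hbound
      _ ≤ 8 * N₀ ^ 2 * (lam ^ 2 * (|x| + |y|) + 0 * (1 + |x| ^ m) + 0 * (1 + |y| ^ m)) := by
          nlinarith [mul_le_mul_of_nonneg_right h2 hl]
end
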